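/- Let M be a symmetric positive definite p×p real matrix, S a symmetric positive semidefinite p×p matrix, and D a symmetric positive semidefinite p×p matrix. Then tr((S + εI)^{-1} D) − tr((M + S + εI)^{-1} D) ≥ 0 for any ε > 0 (taking the invertible regularizations), i.e. the numerator of the extended Fellner-Schall update is nonnegative. -/

import Mathlib

/-!
Put `A = S + ε • 1`, which is positive definite, so the difference of traces is
`tr ((A⁻¹ - (A + M)⁻¹) * D)`. Inversion is antitone in the Loewner order: with `B = A + M`,
`A⁻¹ - B⁻¹ = B⁻¹ (M + M A⁻¹ M) B⁻¹` is a congruence of a positive semidefinite matrix.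
Finally, the trace of a product of positive semidefinite matrices is nonnegative: writing
`D = Cᴴ C` turns `tr (P D)` into `tr (C P Cᴴ)`.
-/

open scoped MatrixOrder ComplexOrder

namespace Matrix

variable {n : Type*} [Fintype n]

lemma PosSemidef.trace_mul_nonneg {𝕜 : Type*} [RCLike 𝕜] {P Q : Matrix n n 𝕜}
    (hP : P.PosSemidef) (hQ : Q.PosSemidef) : 0 ≤ (P * Q).trace := by
  classical
  obtain ⟨C, rfl⟩ := CStarAlgebra.nonneg_iff_eq_star_mul_self.mp hQ.nonneg
  rw [star_eq_conjTranspose, ← mul_assoc, trace_mul_cycle]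
  exact (hP.mul_mul_conjTranspose_same C).trace_nonneg

lemma inv_sub_inv_add_eq {R : Type*} [CommRing R] [DecidableEq n] {A C : Matrix n n R}
    (hA : IsUnit A.det) (hAC : IsUnit (A + C).det) :
    A⁻¹ - (A + C)⁻¹ = (A + C)⁻¹ * (C + C * A⁻¹ * C) * (A + C)⁻¹ := by
  symm
  calc (A + C)⁻¹ * (C + C * A⁻¹ * C) * (A + C)⁻¹
      = (A + C)⁻¹ * (C * (A⁻¹ * A) + C * A⁻¹ * C) * (A + C)⁻¹ := by
        rw [nonsing_inv_mul _ hA, mul_one]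
    _ = (A + C)⁻¹ * C * A⁻¹ * ((A + C) * (A + C)⁻¹) := by noncomm_ring
    _ = (A + C)⁻¹ * ((A + C) - A) * A⁻¹ := by
        rw [mul_nonsing_inv _ hAC, mul_one, add_sub_cancel_left]
    _ = A⁻¹ - (A + C)⁻¹ := by
        rw [mul_sub, sub_mul, nonsing_inv_mul _ hAC, mul_assoc, mul_nonsing_inv _ hA, one_mul,
          mul_one]

lemma PosDef.posSemidef_inv_sub_inv_add {𝕜 : Type*} [RCLike 𝕜] [DecidableEq n]
    {A C : Matrix n n 𝕜} (hA : A.PosDef) (hC : C.PosSemidef) :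
    (A⁻¹ - (A + C)⁻¹).PosSemidef := by
  have hAC := hA.add_posSemidef hC
  rw [inv_sub_inv_add_eq ((isUnit_iff_isUnit_det A).mp hA.isUnit)
    ((isUnit_iff_isUnit_det _).mp hAC.isUnit)]
  have hmid : (C + C * A⁻¹ * C).PosSemidef := by
    simpa only [hC.isHermitian.eq] using hC.add (hA.inv.posSemidef.mul_mul_conjTranspose_same C)
  simpa only [hAC.inv.isHermitian.eq] using hmid.conjTranspose_mul_mul_same (A + C)⁻¹

end Matrix

theorem efs_numerator_nonneg {p : ℕ} (M S D : Matrix (Fin p) (Fin p) ℝ)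
    (hM : M.PosDef) (hS : S.PosSemidef) (hD : D.PosSemidef)
    (ε : ℝ) (hε : 0 < ε) :
    0 ≤ ((S + ε • 1)⁻¹ * D).trace - ((M + S + ε • 1)⁻¹ * D).trace := by
  have hA : (S + ε • 1).PosDef := Matrix.PosDef.posSemidef_add hS (Matrix.PosDef.one.smul hε)
  have hinv := hA.posSemidef_inv_sub_inv_add hM.posSemidef
  rw [show M + S + ε • 1 = S + ε • 1 + M by abel, ← Matrix.trace_sub, ← Matrix.sub_mul]
  exact hinv.trace_mul_nonneg hD
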